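/- For every integer d ≥ 3, there is a unique value x_d ∈ (0,1) such that h_d(x_d) = 0. -/

import Mathlib

/-- The function $g_d(x,z)$ from the paper. -/
noncomputable def gFun (d : ℕ) (x z : ℝ) : ℝ :=
  ((d : ℝ)/2 - 1 - d * z) * x * Real.log x
    + ((d : ℝ) - 1) * (1 - x) * Real.log ((1 - x)/2)
    - 2 * d * x * z * Real.log z
    - (1 - 2*z) * d * x / 2 * Real.log (1 - 2*z)
    - d * ((1 - x)/2 - z * x) * Real.log ((1 - x)/2 - z * x)

/-- The maximizer $z_0(x) = \frac{1-\sqrt{1-2(1-x)x}}{2x}$. -/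
noncomputable def z0 (x : ℝ) : ℝ := (1 - Real.sqrt (1 - 2 * (1 - x) * x)) / (2 * x)

/-- The function $h_d(x) = g_d(x, z_0(x))$. -/
noncomputable def hFun (d : ℕ) (x : ℝ) : ℝ := gFun d x (z0 x)

/-!
On `(0, 1)` write `r = √(x² + (1 - x)²) = √(1 - 2(1 - x)x)`. Then `z₀ = (1 - x)/(1 + r)`,
`1 - 2z₀ = x/(1 - x + r)` and `h_d = d·A + B` with
`A = (1 - x) log((1 + r)/2) - ((1 - 2x)/2) log(1 - x + r)`, `B = -x log x - (1 - x) log((1 - x)/2)`.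
Since `z₀` is a critical point of `g_d(x, ·)`, the contributions of `r'` to `A'` cancel and
`A' = log(1 - x + r) - log((1 + r)/2)`. Hence `A + (1 - x)A' = ½ log(1 - x + r) > 0` and
`B + (1 - x)B' = -log x > 0`, so `h_d/(1 - x)` is strictly increasing and `h_d` has at most one
zero. There is one by the intermediate value theorem, as `h_d(1/100) < 0 < h_d(1 - 1/(4d))`.
-/

open Real Set

noncomputable def rad (x : ℝ) : ℝ := √(1 - 2 * (1 - x) * x)

noncomputable def hFunCoeff (x : ℝ) : ℝ :=
  (1 - x) * log ((1 + rad x) / 2) - (1 - 2 * x) / 2 * log (1 - x + rad x)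

noncomputable def hFunConst (x : ℝ) : ℝ :=
  -(x * log x) - (1 - x) * log ((1 - x) / 2)

section rad

variable {x : ℝ}

lemma rad_sq (x : ℝ) : rad x ^ 2 = 1 - 2 * (1 - x) * x :=
  sq_sqrt (by nlinarith [sq_nonneg (2 * x - 1)])

lemma rad_pos (x : ℝ) : 0 < rad x :=
  sqrt_pos.2 (by nlinarith [sq_nonneg (2 * x - 1)])

lemma rad_le_one (hx0 : 0 ≤ x) (hx1 : x ≤ 1) : rad x ≤ 1 :=
  sqrt_le_one.2 (by nlinarith)

lemma one_sub_le_rad (x : ℝ) : 1 - x ≤ rad x :=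
  le_sqrt_of_sq_le (by nlinarith [sq_nonneg x])

lemma lt_rad (hx : x < 1) : x < rad x :=
  lt_sqrt_of_sq_lt (by nlinarith)

lemma one_lt_one_sub_add_rad (hx : x < 1) : 1 < 1 - x + rad x := by
  linarith [lt_rad hx]

lemma z0_eq (hx : x ≠ 0) : z0 x = (1 - x) / (1 + rad x) := by
  have := rad_pos x
  rw [z0, ← rad, div_eq_div_iff (by positivity) (by positivity)]
  linear_combination -(rad_sq x)

lemma one_sub_two_mul_z0 (hx0 : x ≠ 0) (hx1 : x < 1) :
    1 - 2 * z0 x = x / (1 - x + rad x) := by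
  have := one_lt_one_sub_add_rad hx1
  have := rad_pos x
  rw [z0_eq hx0]
  field_simp
  linear_combination (rad_sq x)

lemma sub_z0_mul_eq (hx0 : x ≠ 0) :
    (1 - x) / 2 - z0 x * x = (1 - x) ^ 2 * (1 - x + rad x) / (1 + rad x) ^ 2 := by
  have := rad_pos x
  rw [z0_eq hx0]
  field_simp
  linear_combination (1 - x) * rad_sq x

end rad

section decomposition

variable {x : ℝ}

lemma log_z0 (hx0 : 0 < x) (hx1 : x < 1) : log (z0 x) = log (1 - x) - log (1 + rad x) := by
  have := rad_pos x
  rw [z0_eq hx0.ne', log_div (by linarith) (by linarith)]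

lemma log_one_sub_two_mul_z0 (hx0 : 0 < x) (hx1 : x < 1) :
    log (1 - 2 * z0 x) = log x - log (1 - x + rad x) := by
  have := one_lt_one_sub_add_rad hx1
  rw [one_sub_two_mul_z0 hx0.ne' hx1, log_div hx0.ne' (by linarith)]

lemma log_sub_z0_mul (hx0 : 0 < x) (hx1 : x < 1) :
    log ((1 - x) / 2 - z0 x * x) = 2 * log (1 - x) + log (1 - x + rad x) - 2 * log (1 + rad x) := by
  have := one_lt_one_sub_add_rad hx1
  have := rad_pos x
  have : 1 - x ≠ 0 := by linarith
  rw [sub_z0_mul_eq hx0.ne', log_div (by positivity) (by positivity),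
    log_mul (by positivity) (by linarith), log_pow, log_pow]
  push_cast
  ring

lemma hFun_eq (d : ℕ) (hx0 : 0 < x) (hx1 : x < 1) :
    hFun d x = d * hFunCoeff x + hFunConst x := by
  have := rad_pos x
  have h2 : log ((1 - x) / 2) = log (1 - x) - log 2 := log_div (by linarith) two_ne_zero
  have h2' : log ((1 + rad x) / 2) = log (1 + rad x) - log 2 := log_div (by linarith) two_ne_zero
  rw [hFun, gFun, hFunCoeff, hFunConst, log_sub_z0_mul hx0 hx1, log_one_sub_two_mul_z0 hx0 hx1,
    log_z0 hx0 hx1, h2, h2']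
  ring

end decomposition

noncomputable def hFunCoeffDeriv (x : ℝ) : ℝ := log (1 - x + rad x) - log ((1 + rad x) / 2)

noncomputable def hFunConstDeriv (x : ℝ) : ℝ := log ((1 - x) / 2) - log x

section derivatives

variable {x : ℝ}

lemma hasDerivAt_rad (x : ℝ) : HasDerivAt rad ((2 * x - 1) / rad x) x := by
  have hr := rad_pos x
  have h : HasDerivAt rad _ x :=
    ((((hasDerivAt_id' x).const_sub 1).const_mul 2).mul (hasDerivAt_id' x)).const_sub 1
      |>.sqrt (sqrt_pos.1 hr).ne'
  refine h.congr_deriv ?_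
  simp only [Pi.mul_apply]
  unfold rad at hr ⊢
  field_simp
  ring

lemma hasDerivAt_hFunCoeff (hx : x < 1) : HasDerivAt hFunCoeff (hFunCoeffDeriv x) x := by
  have hr := rad_pos x
  have hs := one_lt_one_sub_add_rad hx
  have h : HasDerivAt hFunCoeff _ x :=
    (((hasDerivAt_id' x).const_sub 1).mul
      (((hasDerivAt_rad x).const_add 1).div_const 2 |>.log (by positivity))).sub
    ((((hasDerivAt_id' x).const_mul 2).const_sub 1).div_const 2 |>.mul
      (((hasDerivAt_id' x).const_sub 1).add (hasDerivAt_rad x)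
        |>.log (show 1 - x + rad x ≠ 0 by linarith)))
  refine h.congr_deriv ?_
  rw [hFunCoeffDeriv]
  simp only [Pi.add_apply]
  field_simp
  linear_combination (1 - 2 * x) * rad_sq x

lemma hasDerivAt_hFunConst (hx0 : 0 < x) (hx1 : x < 1) :
    HasDerivAt hFunConst (hFunConstDeriv x) x := by
  have h : HasDerivAt hFunConst _ x :=
    ((hasDerivAt_id' x).mul (hasDerivAt_log hx0.ne')).neg.sub
      (((hasDerivAt_id' x).const_sub 1).mul
        (((hasDerivAt_id' x).const_sub 1).div_const 2 |>.log (by linarith)))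
  refine h.congr_deriv ?_
  rw [hFunConstDeriv]
  have : 1 - x ≠ 0 := by linarith
  field_simp
  ring

lemma hasDerivAt_hFun (d : ℕ) (hx0 : 0 < x) (hx1 : x < 1) :
    HasDerivAt (hFun d) (d * hFunCoeffDeriv x + hFunConstDeriv x) x := by
  refine (((hasDerivAt_hFunCoeff hx1).const_mul (d : ℝ)).add
    (hasDerivAt_hFunConst hx0 hx1)).congr_of_eventuallyEq ?_
  filter_upwards [Ioo_mem_nhds hx0 hx1] with y hy
  exact hFun_eq d hy.1 hy.2

end derivatives

lemma strictMonoOn_div_one_sub {f f' : ℝ → ℝ} {s : Set ℝ} (hs : Convex ℝ s) (hs1 : s ⊆ Iio 1)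
    (hf : ∀ x ∈ s, HasDerivAt f (f' x) x) (hpos : ∀ x ∈ s, 0 < f x + (1 - x) * f' x) :
    StrictMonoOn (fun x => f x / (1 - x)) s := by
  have hg : ∀ x ∈ s,
      HasDerivAt (fun x => f x / (1 - x)) ((f x + (1 - x) * f' x) / (1 - x) ^ 2) x := by
    intro x hx
    refine ((hf x hx).div ((hasDerivAt_id' x).const_sub 1) (sub_pos.2 (hs1 hx)).ne').congr_deriv ?_
    ring
  refine strictMonoOn_of_deriv_pos hs (fun x hx => (hg x hx).continuousAt.continuousWithinAt)
    fun x hx => ?_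
  have hxs := interior_subset hx
  have := sub_pos.2 (mem_Iio.1 (hs1 hxs))
  rw [(hg x hxs).deriv]
  exact div_pos (hpos x hxs) (by positivity)

lemma hFunCoeff_add_mul_deriv (x : ℝ) :
    hFunCoeff x + (1 - x) * hFunCoeffDeriv x = log (1 - x + rad x) / 2 := by
  rw [hFunCoeff, hFunCoeffDeriv]
  ring

lemma hFunConst_add_mul_deriv (x : ℝ) : hFunConst x + (1 - x) * hFunConstDeriv x = -log x := by
  rw [hFunConst, hFunConstDeriv]
  ring

lemma strictMonoOn_hFun_div (d : ℕ) : StrictMonoOn (fun x => hFun d x / (1 - x)) (Ioo 0 1) := by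
  refine strictMonoOn_div_one_sub (convex_Ioo 0 1) (fun x hx => hx.2)
    (fun x hx => hasDerivAt_hFun d hx.1 hx.2) fun x ⟨hx0, hx1⟩ => ?_
  have hcoeff := log_pos (one_lt_one_sub_add_rad hx1)
  have hconst := log_neg hx0 hx1
  calc 0 < d * (log (1 - x + rad x) / 2) + -log x := by
        have : (0 : ℝ) ≤ d := d.cast_nonneg
        nlinarith
    _ = hFun d x + (1 - x) * (d * hFunCoeffDeriv x + hFunConstDeriv x) := by
      rw [hFun_eq d hx0 hx1, ← hFunCoeff_add_mul_deriv, ← hFunConst_add_mul_deriv]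
      ring

section signs

variable {x : ℝ}

lemma hFunCoeffDeriv_le (hx0 : 0 ≤ x) (hx1 : x ≤ 1) : hFunCoeffDeriv x ≤ 2 * (1 - x) := by
  have hr := rad_pos x
  have hr1 := rad_le_one hx0 hx1
  have hs := one_sub_le_rad x
  have hq : 0 < (1 - x + rad x) / ((1 + rad x) / 2) := by positivity
  calc hFunCoeffDeriv x = log ((1 - x + rad x) / ((1 + rad x) / 2)) := by
        rw [hFunCoeffDeriv, ← log_div (by linarith) (by positivity)]
    _ ≤ (1 - x + rad x) / ((1 + rad x) / 2) - 1 := log_le_sub_one_of_pos hq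
    _ ≤ 2 * (1 - x) := by
      rw [sub_le_iff_le_add, div_le_iff₀ (by positivity)]
      nlinarith

lemma le_hFunConst (hx0 : 0 < x) (hx1 : x < 1) : x * (1 - x) ≤ hFunConst x := by
  have h1 : log x ≤ x - 1 := log_le_sub_one_of_pos hx0
  have h2 : log ((1 - x) / 2) ≤ 0 := log_nonpos (by linarith) (by linarith)
  rw [hFunConst]
  nlinarith

lemma hFun_pos {d : ℕ} (hx0 : 0 < x) (hx1 : x < 1) (h : 2 * d * (1 - x) < x) : 0 < hFun d x := by
  have hA : -((1 - x) * hFunCoeffDeriv x) ≤ hFunCoeff x := by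
    linarith [hFunCoeff_add_mul_deriv x, log_pos (one_lt_one_sub_add_rad hx1)]
  have hA' := hFunCoeffDeriv_le hx0.le hx1.le
  have hd : (0 : ℝ) ≤ d := by positivity
  have h1x : 0 < 1 - x := by linarith
  rw [hFun_eq d hx0 hx1]
  calc 0 < (1 - x) * (x - 2 * d * (1 - x)) := mul_pos h1x (by linarith)
    _ = -(d * ((1 - x) * (2 * (1 - x)))) + x * (1 - x) := by ring
    _ ≤ -(d * ((1 - x) * hFunCoeffDeriv x)) + hFunConst x := by
      gcongr
      exact le_hFunConst hx0 hx1
    _ ≤ d * hFunCoeff x + hFunConst x := by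
      nlinarith [mul_le_mul_of_nonneg_left hA hd]

lemma hFunCoeff_le_of_le_half (hx0 : 0 ≤ x) (hx : x ≤ 1 / 2) :
    hFunCoeff x ≤ -((1 - 2 * x) / 2 * log (2 * (1 - x))) := by
  have hr := rad_pos x
  have h1 : log ((1 + rad x) / 2) ≤ 0 :=
    log_nonpos (by positivity) (by linarith [rad_le_one hx0 (by linarith)])
  have h2 : log (2 * (1 - x)) ≤ log (1 - x + rad x) :=
    log_le_log (by linarith) (by linarith [one_sub_le_rad x])
  rw [hFunCoeff]
  nlinarith

lemma hFun_hundredth_neg {d : ℕ} (hd : 3 ≤ d) : hFun d (1 / 100) < 0 := by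
  have hA := hFunCoeff_le_of_le_half (x := 1 / 100) (by norm_num) (by norm_num)
  have e1 : log (2 * (1 - 1 / 100) : ℝ) = log 2 + log (99 / 100) := by
    rw [← log_mul (by norm_num) (by norm_num)]
    norm_num
  have e2 : log ((1 : ℝ) / 100) = -(2 * log 10) := by
    rw [one_div, log_inv, show (100 : ℝ) = 10 ^ 2 by norm_num, log_pow]
    norm_num
  have e3 : log ((1 - 1 / 100) / 2 : ℝ) = log (99 / 100) - log 2 := by
    rw [← log_div (by norm_num) (by norm_num)]
    norm_num
  have hlog10 : log 10 ≤ 9 := by linarith [log_le_sub_one_of_pos (show (0 : ℝ) < 10 by norm_num)]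
  have hlog99 := one_sub_inv_le_log_of_pos (show (0 : ℝ) < 99 / 100 by norm_num)
  have hlog2 := log_two_gt_d9
  have hlog2' := log_two_lt_d9
  rw [e1] at hA
  have hA0 : hFunCoeff (1 / 100) ≤ 0 := by norm_num at hA hlog99 ⊢; nlinarith
  have hdA : (d : ℝ) * hFunCoeff (1 / 100) ≤ 3 * hFunCoeff (1 / 100) :=
    mul_le_mul_of_nonpos_right (by exact_mod_cast hd) hA0
  rw [hFun_eq d (by norm_num) (by norm_num), hFunConst, e2, e3]
  norm_num at hA hlog99 ⊢
  nlinarith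

end signs

lemma continuousOn_hFun (d : ℕ) : ContinuousOn (hFun d) (Ioo 0 1) :=
  fun _ hx => (hasDerivAt_hFun d hx.1 hx.2).continuousAt.continuousWithinAt

/-- For every integer $d \ge 3$ there is a unique $x_d \in (0,1)$ with
$h_d(x_d) = 0$. -/
theorem hFun_existsUnique_root (d : ℕ) (hd : 3 ≤ d) :
    ∃! x : ℝ, x ∈ Set.Ioo (0 : ℝ) 1 ∧ hFun d x = 0 := by
  obtain ⟨q, hq0, hq, hdq⟩ : ∃ q : ℝ, 0 < q ∧ q ≤ 1 / 12 ∧ 2 * d * q = 1 / 2 := by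
    have hd' : (3 : ℝ) ≤ d := by exact_mod_cast hd
    refine ⟨1 / (4 * d), by positivity, ?_, by field_simp; ring⟩
    rw [div_le_div_iff₀ (by positivity) (by norm_num)]
    linarith
  have hpos : 0 < hFun d (1 - q) := hFun_pos (by linarith) (by linarith) (by linarith)
  obtain ⟨c, hc, hc0⟩ := intermediate_value_Ioo (show 1 / 100 ≤ 1 - q by linarith)
    ((continuousOn_hFun d).mono (Icc_subset_Ioo (by norm_num) (by linarith)))
    ⟨hFun_hundredth_neg hd, hpos⟩
  have hc' : c ∈ Ioo (0 : ℝ) 1 := ⟨by linarith [hc.1], by linarith [hc.2]⟩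
  refine ⟨c, ⟨hc', hc0⟩, fun y ⟨hy, hy0⟩ => (strictMonoOn_hFun_div d).injOn hy hc' ?_⟩
  simp only [hy0, hc0, zero_div]
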